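/- Let X be a quandle, k a field, and A = k[X] its quandle algebra. Then the Lie transformation algebra 𝒯(A) — the smallest Lie subalgebra of End_k(A) (with bracket [f,g] = f∘g − g∘f) containing all operators L_a and R_a for a ∈ A — is contained in the k-linear span of all composites L_{a_1} ∘ ⋯ ∘ L_{a_m} ∘ R_{b_1} ∘ ⋯ ∘ R_{b_n} with a_i, b_j ∈ A and m + n ≥ 1 (all left multiplications appearing before all right multiplications). -/

import Mathlib

/-! Right self-distributivity says that right multiplication by a basis vector `e_z` is an algebra
endomorphism of `k[X]`, i.e. `R_{e_z} L_a = L_{a e_z} R_{e_z}` and `R_{e_z} R_b = R_{b e_z} R_{e_z}`.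
So right multiplications can be pushed to the right end of any word in the `L`'s and `R`'s, the span
of the ordered monomials `L_{a_1} ⋯ L_{a_m} R_{b_1} ⋯ R_{b_n}` is closed under composition, hence
under commutators, and it contains all `L_a` and `R_b`. -/

/-- The quandle algebra multiplication on `X →₀ k`, as a bilinear map,
determined on basis vectors by `e_x · e_y = e_{op x y}`. -/
noncomputable def qmul {k X : Type*} [Field k] (op : X → X → X) :
    (X →₀ k) →ₗ[k] (X →₀ k) →ₗ[k] (X →₀ k) :=
  Finsupp.lsum k fun x =>
    LinearMap.toSpanSingleton k ((X →₀ k) →ₗ[k] (X →₀ k))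
      (Finsupp.lsum k fun y =>
        LinearMap.toSpanSingleton k (X →₀ k) (Finsupp.single (op x y) (1 : k)))

/-- A derivation of the quandle algebra: a linear map satisfying the Leibniz rule. -/
def IsDerivation {k X : Type*} [Field k] (op : X → X → X)
    (D : (X →₀ k) →ₗ[k] (X →₀ k)) : Prop :=
  ∀ a b : X →₀ k, D (qmul op a b) = qmul op (D a) b + qmul op a (D b)
attribute [local instance 100] LieRing.ofAssociativeRing

theorem SemiconjBy.prod_ofFn {M : Type*} [Monoid M] {c : M} {n : ℕ} {f g : Fin n → M}
    (h : ∀ i, SemiconjBy c (f i) (g i)) : SemiconjBy c (List.ofFn f).prod (List.ofFn g).prod := by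
  induction n with
  | zero => simp
  | succ n ih =>
    simp only [List.ofFn_succ, List.prod_cons]
    exact (h 0).mul_right (ih fun i => h i.succ)

theorem Submodule.mul_mem_span_of_forall_mul_mem {R A : Type*} [Semiring R] [Semiring A]
    [Module R A] [SMulCommClass R A A] {s : Set A} {f : A} (hf : ∀ g ∈ s, f * g ∈ span R s)
    {g : A} (hg : g ∈ span R s) : f * g ∈ span R s := by
  induction hg using Submodule.span_induction with
  | mem g hg => exact hf g hg
  | zero => simp
  | add g g' _ _ h h' => rw [mul_add]; exact add_mem h h'
  | smul r g _ h => rw [mul_smul_comm]; exact Submodule.smul_mem _ r h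

theorem LieSubalgebra.lieSpan_le_of_mul_mem {R A : Type*} [CommRing R] [Ring A] [Algebra R A]
    {s : Set A} {M : Submodule R A} (hs : s ⊆ M) (hM : ∀ x ∈ M, ∀ y ∈ M, x * y ∈ M) :
    (lieSpan R A s).toSubmodule ≤ M := by
  let M' : LieSubalgebra R A :=
    { M with
      lie_mem' := fun {x y} hx hy => by
        rw [Ring.lie_def]
        exact M.sub_mem (hM x hx y hy) (hM y hy x hx) }
  exact (lieSpan_le (K := M')).mpr hs

section QuandleAlgebra

variable {k X : Type*} [Field k] {op : X → X → X}

theorem qmul_single_single (x y : X) (s t : k) :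
    qmul op (Finsupp.single x s) (Finsupp.single y t) = Finsupp.single (op x y) (s * t) := by
  simp [qmul, Finsupp.smul_single]

theorem qmul_qmul_single (distrib : ∀ x y z, op (op x y) z = op (op x z) (op y z)) (z : X)
    (a b : X →₀ k) :
    qmul op (qmul op a b) (Finsupp.single z 1)
      = qmul op (qmul op a (Finsupp.single z 1)) (qmul op b (Finsupp.single z 1)) := by
  induction a using Finsupp.induction_linear with
  | zero => simp
  | add a a' ha ha' => simp only [map_add, LinearMap.add_apply, ha, ha']
  | single x s =>
    induction b using Finsupp.induction_linear with
    | zero => simp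
    | add b b' hb hb' => simp only [map_add, LinearMap.add_apply, hb, hb']
    | single y t => simp only [qmul_single_single, mul_one]; rw [distrib]

variable (op) in
noncomputable def lrMonomial {m n : ℕ} (as : Fin m → X →₀ k) (bs : Fin n → X →₀ k) :
    Module.End k (X →₀ k) :=
  (List.ofFn fun i => (qmul op (as i) : Module.End k (X →₀ k))).prod *
    (List.ofFn fun j => ((qmul op).flip (bs j) : Module.End k (X →₀ k))).prod

variable (k op) in
noncomputable def lrSpan : Submodule k (Module.End k (X →₀ k)) :=
  Submodule.span k {g | ∃ (m n : ℕ), 1 ≤ m + n ∧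
    ∃ (as : Fin m → X →₀ k) (bs : Fin n → X →₀ k), g = lrMonomial op as bs}

theorem lrMonomial_mem_lrSpan {m n : ℕ} (h : 1 ≤ m + n) (as : Fin m → X →₀ k)
    (bs : Fin n → X →₀ k) : lrMonomial op as bs ∈ lrSpan k op :=
  Submodule.subset_span ⟨m, n, h, as, bs, rfl⟩

theorem qmul_mul_lrMonomial (a : X →₀ k) {m n : ℕ} (as : Fin m → X →₀ k) (bs : Fin n → X →₀ k) :
    qmul op a * lrMonomial op as bs = lrMonomial op (Fin.cons a as) bs := by
  simp only [lrMonomial, List.ofFn_succ, Fin.cons_zero, Fin.cons_succ, List.prod_cons, mul_assoc]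

theorem semiconjBy_flip_single_qmul (distrib : ∀ x y z, op (op x y) z = op (op x z) (op y z))
    (z : X) (a : X →₀ k) :
    SemiconjBy ((qmul op).flip (Finsupp.single z 1) : Module.End k (X →₀ k)) (qmul op a)
      (qmul op (qmul op a (Finsupp.single z 1))) :=
  LinearMap.ext fun b => qmul_qmul_single distrib z a b

theorem semiconjBy_flip_single_flip (distrib : ∀ x y z, op (op x y) z = op (op x z) (op y z))
    (z : X) (b : X →₀ k) :
    SemiconjBy ((qmul op).flip (Finsupp.single z 1) : Module.End k (X →₀ k)) ((qmul op).flip b)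
      ((qmul op).flip (qmul op b (Finsupp.single z 1))) :=
  LinearMap.ext fun a => qmul_qmul_single distrib z a b

theorem flip_single_mul_lrMonomial (distrib : ∀ x y z, op (op x y) z = op (op x z) (op y z))
    (z : X) {m n : ℕ} (as : Fin m → X →₀ k) (bs : Fin n → X →₀ k) :
    (qmul op).flip (Finsupp.single z 1) * lrMonomial op as bs
      = lrMonomial op (fun i => qmul op (as i) (Finsupp.single z 1))
          (Fin.snoc (fun j => qmul op (bs j) (Finsupp.single z 1)) (Finsupp.single z 1)) := by
  rw [lrMonomial, ← mul_assoc,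
    (SemiconjBy.prod_ofFn fun i => semiconjBy_flip_single_qmul distrib z (as i)).eq, mul_assoc,
    (SemiconjBy.prod_ofFn fun j => semiconjBy_flip_single_flip distrib z (bs j)).eq,
    lrMonomial, List.ofFn_succ']
  simp only [Fin.snoc_castSucc, Fin.snoc_last, List.prod_concat]

theorem qmul_mul_mem_lrSpan (a : X →₀ k) {g : Module.End k (X →₀ k)} (hg : g ∈ lrSpan k op) :
    qmul op a * g ∈ lrSpan k op := by
  refine Submodule.mul_mem_span_of_forall_mul_mem ?_ hg
  rintro _ ⟨m, n, -, as, bs, rfl⟩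
  rw [qmul_mul_lrMonomial]
  exact lrMonomial_mem_lrSpan (by omega) _ _

theorem flip_mul_mem_lrSpan (distrib : ∀ x y z, op (op x y) z = op (op x z) (op y z))
    (c : X →₀ k) {g : Module.End k (X →₀ k)} (hg : g ∈ lrSpan k op) :
    (qmul op).flip c * g ∈ lrSpan k op := by
  induction c using Finsupp.induction_linear with
  | zero => simp
  | add c c' hc hc' => rw [map_add, add_mul]; exact add_mem hc hc'
  | single z t =>
    rw [← Finsupp.smul_single_one, map_smul, smul_mul_assoc]
    refine Submodule.smul_mem _ t (Submodule.mul_mem_span_of_forall_mul_mem ?_ hg)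
    rintro _ ⟨m, n, -, as, bs, rfl⟩
    rw [flip_single_mul_lrMonomial distrib]
    exact lrMonomial_mem_lrSpan (by omega) _ _

theorem lrMonomial_mul_mem_lrSpan (distrib : ∀ x y z, op (op x y) z = op (op x z) (op y z))
    {m n : ℕ} (as : Fin m → X →₀ k) (bs : Fin n → X →₀ k) {g : Module.End k (X →₀ k)}
    (hg : g ∈ lrSpan k op) : lrMonomial op as bs * g ∈ lrSpan k op := by
  have prod_mul_mem (l : List (Module.End k (X →₀ k)))
      (hl : ∀ f ∈ l, ∀ g ∈ lrSpan k op, f * g ∈ lrSpan k op) :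
      ∀ g ∈ lrSpan k op, l.prod * g ∈ lrSpan k op :=
    List.prod_induction _ (fun f f' hf hf' g hg => mul_assoc f f' g ▸ hf _ (hf' g hg))
      (fun g hg => (one_mul g).symm ▸ hg) hl
  rw [lrMonomial, mul_assoc]
  refine prod_mul_mem _ ?_ _ (prod_mul_mem _ ?_ g hg)
  · simp only [List.mem_ofFn]
    rintro _ ⟨i, rfl⟩
    exact fun _ => qmul_mul_mem_lrSpan (as i)
  · simp only [List.mem_ofFn]
    rintro _ ⟨j, rfl⟩
    exact fun _ => flip_mul_mem_lrSpan distrib (bs j)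

theorem mul_mem_lrSpan (distrib : ∀ x y z, op (op x y) z = op (op x z) (op y z))
    {f g : Module.End k (X →₀ k)} (hf : f ∈ lrSpan k op) (hg : g ∈ lrSpan k op) :
    f * g ∈ lrSpan k op := by
  induction hf using Submodule.span_induction with
  | mem f hf =>
    obtain ⟨m, n, -, as, bs, rfl⟩ := hf
    exact lrMonomial_mul_mem_lrSpan distrib as bs hg
  | zero => simp
  | add f f' _ _ hf hf' => rw [add_mul]; exact add_mem hf hf'
  | smul r f _ hf => rw [smul_mul_assoc]; exact Submodule.smul_mem _ r hf

end QuandleAlgebra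

theorem lie_transformation_in_LR_span_general {k X : Type*} [Field k] (op : X → X → X)
    (distrib : ∀ x y z, op (op x y) z = op (op x z) (op y z)) :
    ∀ f ∈ LieSubalgebra.lieSpan k (Module.End k (X →₀ k))
        ({g | ∃ a : X →₀ k, g = qmul op a} ∪ {g | ∃ a : X →₀ k, g = (qmul op).flip a}),
      f ∈ Submodule.span k
        {g : Module.End k (X →₀ k) | ∃ (m n : ℕ), 1 ≤ m + n ∧
          ∃ (as : Fin m → (X →₀ k)) (bs : Fin n → (X →₀ k)),
            g = (List.ofFn fun i => (qmul op (as i) : Module.End k (X →₀ k))).prod *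
                (List.ofFn fun j => ((qmul op).flip (bs j) : Module.End k (X →₀ k))).prod} := by
  have generators_mem : {g | ∃ a : X →₀ k, g = qmul op a} ∪
      {g | ∃ a : X →₀ k, g = (qmul op).flip a} ⊆ (lrSpan k op : Set (Module.End k (X →₀ k))) := by
    rintro g (⟨a, rfl⟩ | ⟨b, rfl⟩)
    · simpa [lrMonomial] using lrMonomial_mem_lrSpan (op := op) (by simp) ![a] ![]
    · simpa [lrMonomial] using lrMonomial_mem_lrSpan (op := op) (by simp) ![] ![b]
  exact fun f hf => LieSubalgebra.lieSpan_le_of_mul_mem generators_mem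
    (fun _ hf _ hg => mul_mem_lrSpan distrib hf hg) hf

/-- The Lie transformation algebra of the quandle algebra `k[X]` — the smallest Lie subalgebra
of the endomorphism algebra containing all left and right multiplication operators — is contained
in the linear span of the composites `L_{a_1} ∘ ⋯ ∘ L_{a_m} ∘ R_{b_1} ∘ ⋯ ∘ R_{b_n}` with
`m + n ≥ 1`. -/
theorem lie_transformation_in_LR_span {k X : Type*} [Field k] (op : X → X → X)
    (idem : ∀ x, op x x = x)
    (rbij : ∀ y, Function.Bijective fun x => op x y)
    (distrib : ∀ x y z, op (op x y) z = op (op x z) (op y z)) :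
    ∀ f ∈ LieSubalgebra.lieSpan k (Module.End k (X →₀ k))
        ({g | ∃ a : X →₀ k, g = qmul op a} ∪ {g | ∃ a : X →₀ k, g = (qmul op).flip a}),
      f ∈ Submodule.span k
        {g : Module.End k (X →₀ k) | ∃ (m n : ℕ), 1 ≤ m + n ∧
          ∃ (as : Fin m → (X →₀ k)) (bs : Fin n → (X →₀ k)),
            g = (List.ofFn fun i => (qmul op (as i) : Module.End k (X →₀ k))).prod *
                (List.ofFn fun j => ((qmul op).flip (bs j) : Module.End k (X →₀ k))).prod} :=
  lie_transformation_in_LR_span_general op distrib
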